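/- arXiv:1108.4294 — 2 statements merged into one kernel-verified Lean document; each statement's English description precedes it below -/
import Mathlib

section
/- Let A and B be unital locally convex algebras and equip the algebraic tensor product A ⊗ B with the projective tensor product topology. Then the map (χ_A, χ_B) ↦ χ_A ⊗ χ_B is a bijection from the set of pairs of continuous characters of A and B onto the set of continuous characters of A ⊗ B. -/
/-!
Since `a ⊗ b = (a ⊗ 1) * (1 ⊗ b)`, a character `χ` of `A ⊗ B` is `χ_A ⊗ χ_B` for its restrictions
`χ_A = χ (· ⊗ 1)` and `χ_B = χ (1 ⊗ ·)`, and these are continuous when `χ` is, because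
`(a, b) ↦ a ⊗ b` is. Conversely `χ_A ⊗ χ_B` is continuous by the universal property of the
projective topology, the bilinear map `(a, b) ↦ χ_A a * χ_B b` being continuous.
-/

open TensorProduct

namespace Algebra.TensorProduct

section ProductMap

variable {R A B C : Type*} [CommSemiring R] [Semiring A] [Semiring B] [CommSemiring C]
  [Algebra R A] [Algebra R B] [Algebra R C]

def productMapEquiv : (A →ₐ[R] C) × (B →ₐ[R] C) ≃ (A ⊗[R] B →ₐ[R] C) where
  toFun p := productMap p.1 p.2
  invFun χ := (χ.comp includeLeft, χ.comp includeRight)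
  left_inv p := by simp
  right_inv χ := by ext <;> simp [← one_def]

end ProductMap

section Topology

variable {R A B : Type*} [CommSemiring R] [Semiring A] [Semiring B] [Algebra R A] [Algebra R B]
  [TopologicalSpace A] [TopologicalSpace B] [TopologicalSpace (A ⊗[R] B)]

theorem continuous_includeLeft (hπ : Continuous fun p : A × B => p.1 ⊗ₜ[R] p.2) :
    Continuous (includeLeft : A →ₐ[R] A ⊗[R] B) :=
  hπ.comp (Continuous.prodMk_left 1)

theorem continuous_includeRight (hπ : Continuous fun p : A × B => p.1 ⊗ₜ[R] p.2) :
    Continuous (includeRight : B →ₐ[R] A ⊗[R] B) :=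
  hπ.comp (Continuous.prodMk_right 1)

theorem continuous_productMap [TopologicalSpace R] [ContinuousMul R]
    (huniv : ∀ φ : A ⊗[R] B →ₗ[R] R,
      Continuous (fun p : A × B => φ (p.1 ⊗ₜ[R] p.2)) → Continuous φ)
    {f : A →ₐ[R] R} {g : B →ₐ[R] R} (hf : Continuous f) (hg : Continuous g) :
    Continuous (productMap f g) :=
  huniv (productMap f g).toLinearMap <| (hf.comp continuous_fst).mul (hg.comp continuous_snd)

theorem continuous_productMap_iff [TopologicalSpace R] [ContinuousMul R]
    (hπ : Continuous fun p : A × B => p.1 ⊗ₜ[R] p.2)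
    (huniv : ∀ φ : A ⊗[R] B →ₗ[R] R,
      Continuous (fun p : A × B => φ (p.1 ⊗ₜ[R] p.2)) → Continuous φ)
    {f : A →ₐ[R] R} {g : B →ₐ[R] R} :
    Continuous (productMap f g) ↔ Continuous f ∧ Continuous g := by
  refine ⟨fun h => ⟨?_, ?_⟩, fun ⟨hf, hg⟩ => continuous_productMap huniv hf hg⟩
  · rw [← productMap_left f g]
    exact h.comp (continuous_includeLeft hπ)
  · rw [← productMap_right f g]
    exact h.comp (continuous_includeRight hπ)

end Topology

end Algebra.TensorProduct

open Algebra.TensorProduct in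
/-- Characters of a projective tensor product: if `A ⊗[ℂ] B` carries a topology for
which the canonical bilinear map is continuous and which has the universal property of
the projective tensor topology (a linear functional is continuous as soon as the
associated bilinear map is), then `(χ_A, χ_B) ↦ χ_A ⊗ χ_B` is a bijection from pairs of
continuous characters of `A` and `B` onto the continuous characters of `A ⊗[ℂ] B`. -/
theorem characters_of_projective_tensor_product
    {A B : Type*} [Ring A] [Ring B] [Algebra ℂ A] [Algebra ℂ B]
    [TopologicalSpace A] [TopologicalSpace B] [TopologicalSpace (A ⊗[ℂ] B)]
    (hπ : Continuous fun p : A × B => p.1 ⊗ₜ[ℂ] p.2)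
    (huniv : ∀ φ : A ⊗[ℂ] B →ₗ[ℂ] ℂ,
      Continuous (fun p : A × B => φ (p.1 ⊗ₜ[ℂ] p.2)) → Continuous φ) :
    ∃ e : {p : (A →ₐ[ℂ] ℂ) × (B →ₐ[ℂ] ℂ) // Continuous p.1 ∧ Continuous p.2} ≃
          {χ : A ⊗[ℂ] B →ₐ[ℂ] ℂ // Continuous χ},
      ∀ (p) (a : A) (b : B), (e p : A ⊗[ℂ] B →ₐ[ℂ] ℂ) (a ⊗ₜ[ℂ] b)
        = (p : (A →ₐ[ℂ] ℂ) × (B →ₐ[ℂ] ℂ)).1 a * (p : (A →ₐ[ℂ] ℂ) × (B →ₐ[ℂ] ℂ)).2 b :=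
  ⟨productMapEquiv.subtypeEquiv fun _ => (continuous_productMap_iff hπ huniv).symm,
    fun _ _ _ => productMap_apply_tmul _ _ _ _⟩
end

section
/- The spectrum Γ_A of a continuous inverse algebra A is equicontinuous: there is a balanced 0-neighbourhood U in A such that |χ(u)| < 1 for all χ ∈ Γ_A and u ∈ U. -/
/-!
Since the unit group is open, `V = {u | 1 - u is a unit}` is a `0`-neighbourhood, and so is its
balanced core `U`. If `‖χ u‖ ≥ 1` for some `u ∈ U`, then `u / χ u ∈ U` by balancedness, so
`1 - u / χ u` is a unit; but `χ` sends it to `0`.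
-/

open Topology

theorem setOf_isUnit_one_sub_mem_nhds_zero {A : Type*} [Ring A] [TopologicalSpace A]
    [ContinuousSub A] (hopen : IsOpen {a : A | IsUnit a}) :
    {u : A | IsUnit (1 - u)} ∈ 𝓝 (0 : A) :=
  (hopen.preimage (continuous_const.sub continuous_id)).mem_nhds (by simp)

theorem AlgHom.norm_apply_lt_one_of_balanced {𝕜 A : Type*} [NormedField 𝕜] [Ring A]
    [Algebra 𝕜 A] (χ : A →ₐ[𝕜] 𝕜) {U : Set A} (hU : Balanced 𝕜 U)
    (hUunits : U ⊆ {u | IsUnit (1 - u)}) {u : A} (hu : u ∈ U) : ‖χ u‖ < 1 := by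
  by_contra! h
  have hχu : χ u ≠ 0 := norm_pos_iff.mp (one_pos.trans_le h)
  have hscaled : (χ u)⁻¹ • u ∈ U :=
    hU.smul_mem (by simpa only [norm_inv] using inv_le_one_of_one_le₀ h) hu
  have hkernel : χ (1 - (χ u)⁻¹ • u) = 0 := by
    rw [map_sub, map_one, map_smul, smul_eq_mul, inv_mul_cancel₀ hχu, sub_self]
  exact ((hUunits hscaled).map χ).ne_zero hkernel

theorem spectrum_equicontinuous_of_CIA_general
    {A : Type*} [Ring A] [Algebra ℂ A] [TopologicalSpace A] [IsTopologicalRing A]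
    [ContinuousSMul ℂ A]
    (hopen : IsOpen {a : A | IsUnit a}) :
    ∃ U ∈ nhds (0 : A), Balanced ℂ U ∧
      ∀ (χ : A →ₐ[ℂ] ℂ), ∀ u ∈ U, ‖χ u‖ < 1 :=
  ⟨balancedCore ℂ {u : A | IsUnit (1 - u)},
    balancedCore_mem_nhds_zero (setOf_isUnit_one_sub_mem_nhds_zero hopen),
    balancedCore_balanced _,
    fun χ _ hu ↦ χ.norm_apply_lt_one_of_balanced (balancedCore_balanced _)
      (balancedCore_subset _) hu⟩

/-- The spectrum of a continuous inverse algebra is equicontinuous: there is a balanced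
`0`-neighbourhood `U` of `A` with `|χ(u)| < 1` for every character `χ` of `A` and every
`u ∈ U`. -/
theorem spectrum_equicontinuous_of_CIA
    {A : Type*} [Ring A] [Algebra ℂ A] [TopologicalSpace A] [IsTopologicalRing A]
    [ContinuousSMul ℂ A]
    (hopen : IsOpen {a : A | IsUnit a})
    (hinv : ContinuousAt (Ring.inverse : A → A) 1) :
    ∃ U ∈ nhds (0 : A), Balanced ℂ U ∧
      ∀ (χ : A →ₐ[ℂ] ℂ), ∀ u ∈ U, ‖χ u‖ < 1 :=
  spectrum_equicontinuous_of_CIA_general hopen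
end
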